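/- Let G be a finite p-group with p odd such that G' is cyclic. Then the set of centralizers {C_G(H) : H ≤ G} equals the set of subgroups of G containing Z(G), and CD(G) equals the set of all subgroups of G containing Z(G). -/

import Mathlib

noncomputable def mCD {G : Type*} [Group G] (H : Subgroup G) : ℕ :=
  Nat.card H * Nat.card (Subgroup.centralizer (H : Set G))

noncomputable def mStar (G : Type*) [Group G] : ℕ :=
  sSup (Set.range fun H : Subgroup G => mCD H)

noncomputable def CD (G : Type*) [Group G] : Set (Subgroup G) :=
  {H | mCD H = mStar G}

noncomputable def deltaCD (G : Type*) [Group G] : ℕ :=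
  Nat.card {H : Subgroup G // H ∉ CD G}

/-!
Let `a ^ p ∈ A`. Conjugation by `a` acts on the cyclic group `G'` as a power map `g ↦ g ^ r`,
and `r ≡ 1 [ZMOD p]` since `a` has `p`-power order. Hence for `x ∈ C(A)`,
`1 = ⁅x, a ^ p⁆ = ⁅x, a⁆ ^ (1 + r + ⋯ + r ^ (p - 1))`, and for odd `p` this exponent is `≡ p`
modulo `p²`, so `⁅x, a⁆ ^ p = 1`. The map `x ↦ ⁅x, a⁆` therefore sends `C(A)` into the at most
`p` elements of `G'` of order dividing `p`, and its fibres are the cosets of `C(A ⊔ ⟨a⟩)`: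
`|C(A) : C(A ⊔ ⟨a⟩)| ≤ p ≤ |A ⊔ ⟨a⟩ : A|` when `a ∉ A`. Climbing from `A` to any `B ≥ A` by such
steps shows that `H ↦ |H| |C(H)|` is monotone, so it takes its maximum `|G| |Z(G)|` on every `H`
containing `Z(G) = C(G)`. Conversely, `H` and `H Z(G)` have the same centralizer, and if
`Z(G) ≤ K` then `K ≤ C(C(K))` have the same order `m*(G) / |C(K)|`.
-/

open Subgroup
open scoped commutatorElement

theorem Int.not_sq_dvd_geom_sum_of_dvd_sub_one {p : ℕ} (hp : Odd p) (hp1 : 1 < p) {r : ℤ}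
    (hr : (p : ℤ) ∣ r - 1) : ¬ (p : ℤ) ^ 2 ∣ ∑ i ∈ Finset.range p, r ^ i := by
  obtain ⟨b, hb⟩ := hr
  have key := odd_sq_dvd_geom_sum₂_sub (1 : ℤ) b hp
  simp only [one_pow, mul_one] at key
  rw [← hb, add_sub_cancel] at key
  intro h
  have hdvd : (p : ℤ) ^ 2 ∣ p := by simpa using (dvd_sub h key)
  have := Int.le_of_dvd (by omega) hdvd
  nlinarith

section

variable {G : Type*} [Group G]

theorem exists_conj_eq_zpow_of_isCyclic (N : Subgroup G) [N.Normal] [IsCyclic N] (a : G) :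
    ∃ r : ℤ, ∀ g ∈ N, a * g * a⁻¹ = g ^ r := by
  obtain ⟨r, hr⟩ := MonoidHom.map_cyclic (MulAut.conjNormal (H := N) a).toMonoidHom
  exact ⟨r, fun g hg => by simpa using congrArg Subtype.val (hr ⟨g, hg⟩)⟩

theorem conj_pow_eq_zpow_pow {N : Subgroup G} {a : G} {r : ℤ}
    (hr : ∀ g ∈ N, a * g * a⁻¹ = g ^ r) (n : ℕ) :
    ∀ g ∈ N, a ^ n * g * (a ^ n)⁻¹ = g ^ r ^ n := by
  induction n with
  | zero => simp
  | succ n ih =>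
    intro g hg
    calc a ^ (n + 1) * g * (a ^ (n + 1))⁻¹ = a * (a ^ n * g * (a ^ n)⁻¹) * a⁻¹ := by group
      _ = g ^ r ^ (n + 1) := by
        rw [ih g hg, hr _ (N.zpow_mem hg _), ← zpow_mul, pow_succ]

theorem commutatorElement_mul_right (x a b : G) :
    ⁅x, a * b⁆ = ⁅x, a⁆ * (a * ⁅x, b⁆ * a⁻¹) := by
  simp only [commutatorElement_def]
  group

theorem commutatorElement_pow_right {x a : G} {r : ℤ}
    (hr : ∀ g ∈ commutator G, a * g * a⁻¹ = g ^ r) (n : ℕ) :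
    ⁅x, a ^ n⁆ = ⁅x, a⁆ ^ ∑ i ∈ Finset.range n, r ^ i := by
  induction n with
  | zero => simp
  | succ n ih =>
    rw [pow_succ', commutatorElement_mul_right, ih,
      hr _ (Subgroup.zpow_mem _ (commutator_mem_commutator (mem_top x) (mem_top a)) _),
      ← zpow_mul, geom_sum_succ, add_comm, zpow_one_add, mul_comm r]

theorem commutatorElement_eq_commutatorElement_iff (x y a : G) :
    ⁅x, a⁆ = ⁅y, a⁆ ↔ x⁻¹ * y * a = a * (x⁻¹ * y) := by
  simp only [commutatorElement_def, mul_left_inj]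
  constructor <;> intro h
  · calc x⁻¹ * y * a = x⁻¹ * (y * a * y⁻¹) * y := by group
      _ = a * (x⁻¹ * y) := by rw [← h]; group
  · calc x * a * x⁻¹ = x * (a * (x⁻¹ * y)) * y⁻¹ := by group
      _ = y * a * y⁻¹ := by rw [← h]; group

end

theorem IsPGroup.commutatorElement_pow_eq_one_of_pow_right {p : ℕ} [Fact p.Prime] (hp : Odd p)
    {G : Type*} [Group G] (hG : IsPGroup p G) (hcyc : IsCyclic (commutator G)) {x a : G}
    (h : ⁅x, a ^ p⁆ = 1) : ⁅x, a⁆ ^ p = 1 := by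
  have hprime : p.Prime := Fact.out
  obtain ⟨r, hr⟩ := exists_conj_eq_zpow_of_isCyclic (commutator G) a
  set w := ⁅x, a⁆
  have hw : w ∈ commutator G := commutator_mem_commutator (mem_top x) (mem_top a)
  obtain ⟨k, hk⟩ := hG w
  obtain ⟨j, -, hj⟩ := (Nat.dvd_prime_pow hprime).mp (orderOf_dvd_of_pow_eq_one hk)
  rcases Nat.lt_or_ge j 2 with hj2 | hj2
  · refine orderOf_dvd_iff_pow_eq_one.mp (hj ▸ ?_)
    interval_cases j <;> simp
  exfalso
  have hp2 : (p : ℤ) ^ 2 ∣ orderOf w := by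
    rw [hj]; exact_mod_cast pow_dvd_pow p hj2
  have hsum : (orderOf w : ℤ) ∣ ∑ i ∈ Finset.range p, r ^ i := by
    rw [orderOf_dvd_iff_zpow_eq_one, ← commutatorElement_pow_right hr, h]
  obtain ⟨K, hK⟩ := hG a
  have hrK : (orderOf w : ℤ) ∣ r ^ p ^ K - 1 := by
    rw [orderOf_dvd_iff_zpow_eq_one, zpow_sub_one, ← conj_pow_eq_zpow_pow hr _ w hw, hK]
    group
  have hr1 : (p : ℤ) ∣ r - 1 := by
    have hpK : ((1 : ℤ) : ZMod p) = ((r ^ p ^ K : ℤ) : ZMod p) :=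
      (ZMod.intCast_eq_intCast_iff_dvd_sub _ _ _).mpr
        ((dvd_pow_self _ two_ne_zero).trans (hp2.trans hrK))
    rw [← ZMod.intCast_eq_intCast_iff_dvd_sub]
    push_cast at hpK ⊢
    rwa [ZMod.pow_card_pow] at hpK
  exact Int.not_sq_dvd_geom_sum_of_dvd_sub_one hp hprime.one_lt hr1 (hp2.trans hsum)

theorem Subgroup.index_eq_card_range {H X : Type*} [Group H] (K : Subgroup H) (f : H → X)
    (hf : ∀ x y, f x = f y ↔ x⁻¹ * y ∈ K) : K.index = Nat.card (Set.range f) := by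
  have hrel : Setoid.ker f = QuotientGroup.leftRel K := by
    ext x y
    rw [Setoid.ker_def, QuotientGroup.leftRel_apply, hf]
  rw [← Nat.card_congr (Setoid.quotientKerEquivRange f), hrel]
  rfl

theorem IsCyclic.natCard_pow_eq_one_le {α : Type*} [Group α] [Finite α] [IsCyclic α] {n : ℕ}
    (hn : 0 < n) : Nat.card {a : α // a ^ n = 1} ≤ n := by
  classical
  have := Fintype.ofFinite α
  rw [Nat.card_eq_fintype_card, Fintype.card_subtype]
  exact IsCyclic.card_pow_eq_one_le hn

theorem Subgroup.centralizer_sup {G : Type*} [Group G] (H K : Subgroup G) :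
    centralizer ((H ⊔ K : Subgroup G) : Set G) = centralizer H ⊓ centralizer K :=
  le_antisymm
    (le_inf (centralizer_le (SetLike.coe_subset_coe.mpr le_sup_left))
      (centralizer_le (SetLike.coe_subset_coe.mpr le_sup_right)))
    (le_centralizer_iff.mp
      (sup_le (le_centralizer_iff.mp inf_le_left) (le_centralizer_iff.mp inf_le_right)))

theorem Subgroup.centralizer_zpowers {G : Type*} [Group G] (g : G) :
    centralizer (zpowers g : Set G) = centralizer {g} := by
  rw [zpowers_eq_closure, centralizer_closure]

theorem Subgroup.centralizer_sup_center {G : Type*} [Group G] (H : Subgroup G) :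
    centralizer ((H ⊔ center G : Subgroup G) : Set G) = centralizer H := by
  rw [centralizer_sup, centralizer_center, inf_top_eq]

theorem IsPGroup.card_centralizer_le_mul_card_centralizer_sup_zpowers {p : ℕ} [Fact p.Prime]
    (hp : Odd p) {G : Type*} [Group G] [Finite G] (hG : IsPGroup p G)
    (hcyc : IsCyclic (commutator G)) {A : Subgroup G} {a : G} (ha : a ^ p ∈ A) :
    Nat.card (centralizer (A : Set G)) ≤
      p * Nat.card (centralizer ((A ⊔ zpowers a : Subgroup G) : Set G)) := by
  set E := centralizer (A : Set G)
  set D := centralizer ((A ⊔ zpowers a : Subgroup G) : Set G) with hD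
  have hDE : D ≤ E := centralizer_le (SetLike.coe_subset_coe.mpr le_sup_left)
  let f : E → {w : commutator G // w ^ p = 1} := fun x =>
    ⟨⟨⁅(x : G), a⁆, commutator_mem_commutator (mem_top _) (mem_top _)⟩, Subtype.ext <| by
      simpa using hG.commutatorElement_pow_eq_one_of_pow_right hp hcyc
        (commutatorElement_eq_one_iff_mul_comm.mpr (mem_centralizer_iff.mp x.2 _ ha).symm)⟩
  have hf : ∀ x y, f x = f y ↔ x⁻¹ * y ∈ D.subgroupOf E := by
    intro x y
    rw [Subtype.ext_iff, Subtype.ext_iff, mem_subgroupOf, hD, centralizer_sup, centralizer_zpowers,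
      mem_inf, mem_centralizer_singleton_iff, coe_mul, coe_inv]
    exact (commutatorElement_eq_commutatorElement_iff _ _ _).trans
      ⟨fun h => ⟨(x⁻¹ * y).2, h⟩, And.right⟩
  calc Nat.card E = (D.subgroupOf E).index * Nat.card D := by
        rw [← (D.subgroupOf E).index_mul_card, Nat.card_congr (subgroupOfEquivOfLe hDE).toEquiv]
    _ ≤ p * Nat.card D := by
        gcongr
        rw [index_eq_card_range _ f hf]
        exact (Finite.card_subtype_le _).trans
          (IsCyclic.natCard_pow_eq_one_le (Fact.out : p.Prime).pos)

theorem IsPGroup.exists_pow_prime_pow_notMem {p : ℕ} {G : Type*} [Group G] (hG : IsPGroup p G)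
    {A : Subgroup G} {b : G} (hb : b ∉ A) : ∃ n, b ^ p ^ n ∉ A ∧ (b ^ p ^ n) ^ p ∈ A := by
  classical
  have hex : ∃ m, b ^ p ^ m ∈ A := by
    obtain ⟨k, hk⟩ := hG b
    exact ⟨k, hk ▸ A.one_mem⟩
  have hpos : Nat.find hex ≠ 0 := fun h0 => hb (by simpa [h0] using Nat.find_spec hex)
  refine ⟨Nat.find hex - 1, Nat.find_min hex (by omega), ?_⟩
  rw [← pow_mul, ← pow_succ, Nat.sub_add_cancel (Nat.one_le_iff_ne_zero.mpr hpos)]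
  exact Nat.find_spec hex

theorem IsPGroup.mul_card_le_card_of_lt {p : ℕ} [Fact p.Prime] {G : Type*} [Group G] [Finite G]
    (hG : IsPGroup p G) {H K : Subgroup G} (hHK : H < K) : p * Nat.card H ≤ Nat.card K := by
  have hindex : (H.subgroupOf K).index ≠ 1 := by
    rw [Ne, index_eq_one, subgroupOf_eq_top]
    exact hHK.not_ge
  obtain ⟨n, hn⟩ := (hG.to_subgroup K).exists_card_eq
  obtain ⟨j, -, hj⟩ := (Nat.dvd_prime_pow Fact.out).mp (hn ▸ (H.subgroupOf K).index_dvd_card)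
  have hj0 : j ≠ 0 := by rintro rfl; exact hindex (by simpa using hj)
  calc p * Nat.card H ≤ (H.subgroupOf K).index * Nat.card H := by
        gcongr
        rw [hj]
        exact Nat.le_self_pow hj0 p
    _ = Nat.card K := by
        rw [← (H.subgroupOf K).index_mul_card,
          Nat.card_congr (subgroupOfEquivOfLe hHK.le).toEquiv]

theorem IsPGroup.mCD_mono {p : ℕ} [Fact p.Prime] (hp : Odd p) {G : Type*} [Group G] [Finite G]
    (hG : IsPGroup p G) (hcyc : IsCyclic (commutator G)) {A B : Subgroup G} (hAB : A ≤ B) :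
    mCD A ≤ mCD B := by
  induction A using WellFoundedGT.induction with
  | _ A ih =>
    rcases hAB.eq_or_lt with rfl | hlt
    · exact le_rfl
    obtain ⟨b, hbB, hbA⟩ := SetLike.exists_of_lt hlt
    obtain ⟨n, ha, hap⟩ := hG.exists_pow_prime_pow_notMem hbA
    set J := A ⊔ zpowers (b ^ p ^ n)
    have hAJ : A < J :=
      lt_of_le_of_ne le_sup_left fun h => ha (h ▸ mem_sup_right (mem_zpowers _))
    have hJB : J ≤ B := sup_le hAB (zpowers_le.mpr (B.pow_mem hbB _))
    calc mCD A ≤ Nat.card A * (p * Nat.card (centralizer (J : Set G))) :=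
          Nat.mul_le_mul_left _
            (hG.card_centralizer_le_mul_card_centralizer_sup_zpowers hp hcyc hap)
      _ = p * Nat.card A * Nat.card (centralizer (J : Set G)) := by ring
      _ ≤ mCD J := Nat.mul_le_mul_right _ (hG.mul_card_le_card_of_lt hAJ)
      _ ≤ mCD B := ih J hAJ hJB

section

variable {G : Type*} [Group G]

theorem mCD_top : mCD (⊤ : Subgroup G) = Nat.card G * Nat.card (center G) := by
  rw [mCD, coe_top, centralizer_univ, card_top]

theorem mCD_center : mCD (center G) = Nat.card G * Nat.card (center G) := by
  rw [mCD, centralizer_center, card_top, mul_comm]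

theorem mStar_eq_mCD_top (h : ∀ H : Subgroup G, mCD H ≤ mCD (⊤ : Subgroup G)) :
    mStar G = mCD (⊤ : Subgroup G) :=
  IsGreatest.csSup_eq ⟨⟨⊤, rfl⟩, by rintro _ ⟨H, rfl⟩; exact h H⟩

theorem centralizer_centralizer_eq_of_mCD_eq [Finite G] {K : Subgroup G}
    (h : mCD (centralizer (K : Set G)) = mCD K) :
    centralizer (centralizer (K : Set G) : Set G) = K := by
  have hcard : Nat.card (centralizer (centralizer (K : Set G) : Set G)) = Nat.card K := by
    rw [mCD, mCD, mul_comm (Nat.card K)] at h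
    exact Nat.eq_of_mul_eq_mul_left Nat.card_pos h
  exact (eq_of_le_of_card_ge (le_centralizer_iff.mp le_rfl) hcard.le).symm

theorem center_le_of_mCD_sup_center_le [Finite G] {H : Subgroup G}
    (h : mCD (H ⊔ center G) ≤ mCD H) : center G ≤ H := by
  rw [mCD, mCD, centralizer_sup_center] at h
  have := eq_of_le_of_card_ge le_sup_left (Nat.le_of_mul_le_mul_right h Nat.card_pos)
  exact this ▸ le_sup_right

end

theorem IsPGroup.mCD_eq_mStar_of_center_le {p : ℕ} [Fact p.Prime] (hp : Odd p) {G : Type*}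
    [Group G] [Finite G] (hG : IsPGroup p G) (hcyc : IsCyclic (commutator G)) {H : Subgroup G}
    (hH : center G ≤ H) : mCD H = mStar G := by
  rw [mStar_eq_mCD_top fun _ => hG.mCD_mono hp hcyc le_top]
  refine le_antisymm (hG.mCD_mono hp hcyc le_top) ?_
  rw [mCD_top, ← mCD_center]
  exact hG.mCD_mono hp hcyc hH

theorem stmt9 {p : ℕ} [Fact p.Prime] (hp : Odd p) {G : Type*} [Group G] [Finite G]
    (hG : IsPGroup p G) (hcyc : IsCyclic (commutator G)) :
    {K : Subgroup G | ∃ H : Subgroup G, Subgroup.centralizer (H : Set G) = K} =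
        {K : Subgroup G | Subgroup.center G ≤ K} ∧
      CD G = {H : Subgroup G | Subgroup.center G ≤ H} := by
  have hCD {H : Subgroup G} (hH : center G ≤ H) : mCD H = mStar G :=
    hG.mCD_eq_mStar_of_center_le hp hcyc hH
  constructor
  · ext K
    refine ⟨fun ⟨H, hHK⟩ => hHK ▸ center_le_centralizer _, fun hK => ⟨centralizer K, ?_⟩⟩
    exact centralizer_centralizer_eq_of_mCD_eq
      ((hCD (center_le_centralizer _)).trans (hCD hK).symm)
  · ext H
    exact ⟨fun hH => center_le_of_mCD_sup_center_le ((hCD le_sup_right).trans hH.symm).le, hCD⟩
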